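/- arXiv:math/0212333 — 3 statements merged into one kernel-verified Lean document; each statement's English description precedes it below -/
import Mathlib

section
/- Let G be a group such that for all a, b in G, the subgroup ⟨a, aᵇ⟩ is nilpotent. Then G is an Engel group: for all x, y in G there exists n such that [y, x, x, ..., x] (with x repeated n times) equals 1. -/
/-!
Write `⁅y, x⁆ = y x y⁻¹ x⁻¹`. Both `x` and `⁅y, x⁆ = (y x y⁻¹) x⁻¹` lie in `⟨x, y x y⁻¹⟩`,
which is nilpotent by hypothesis (take `b = y⁻¹`). In a nilpotent group of class `c`,
`[⁅y, x⁆, x, …, x]` with `c` copies of `x` lies in the `c`-th term of the lower central series,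
which is trivial; hence `engel y x (c + 1) = 1`.
-/

open scoped commutatorElement

/-- Left-normed iterated commutator: `engel y x n = [y, x, x, ..., x]` (n copies of x). -/
def engel {G : Type*} [Group G] (y x : G) : ℕ → G
  | 0 => y
  | n + 1 => ⁅engel y x n, x⁆

section Engel

variable {G : Type*} [Group G]

theorem engel_succ (y x : G) (n : ℕ) : engel y x (n + 1) = engel ⁅y, x⁆ x n := by
  induction n with
  | zero => rfl
  | succ n ih => rw [engel, ih]; rfl

theorem map_engel {H : Type*} [Group H] (f : G →* H) (y x : G) (n : ℕ) :
    f (engel y x n) = engel (f y) (f x) n := by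
  induction n with
  | zero => rfl
  | succ n ih => simp only [engel, map_commutatorElement, ih]

theorem engel_mem_lowerCentralSeries (y x : G) (n : ℕ) :
    engel y x n ∈ Subgroup.lowerCentralSeries (⊤ : Subgroup G) n := by
  induction n with
  | zero => trivial
  | succ n ih => exact Subgroup.commutator_mem_commutator ih (Subgroup.mem_top x)

theorem engel_nilpotencyClass [Group.IsNilpotent G] (y x : G) :
    engel y x (Group.nilpotencyClass G) = 1 := by
  simpa only [Subgroup.lowerCentralSeries_nilpotencyClass, Subgroup.mem_bot] using
    engel_mem_lowerCentralSeries y x (Group.nilpotencyClass G)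

theorem engel_eq_one_of_mem_of_isNilpotent (H : Subgroup G) [Group.IsNilpotent H]
    {y x : G} (hy : y ∈ H) (hx : x ∈ H) : engel y x (Group.nilpotencyClass H) = 1 := by
  simpa only [map_engel, map_one, Subgroup.coe_subtype] using
    congrArg H.subtype (engel_nilpotencyClass (⟨y, hy⟩ : H) ⟨x, hx⟩)

theorem commutatorElement_mem_closure_conj (y x : G) :
    ⁅y, x⁆ ∈ Subgroup.closure {x, y * x * y⁻¹} := by
  rw [commutatorElement_def]
  exact mul_mem (Subgroup.subset_closure (Set.mem_insert_of_mem _ rfl))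
    (inv_mem (Subgroup.subset_closure (Set.mem_insert _ _)))

end Engel

theorem stmt_3 {G : Type*} [Group G]
    (h : ∀ a b : G, Group.IsNilpotent ↥(Subgroup.closure {a, b⁻¹ * a * b})) :
    ∀ x y : G, ∃ n : ℕ, 1 ≤ n ∧ engel y x n = 1 := by
  intro x y
  have hnil := h x y⁻¹
  rw [inv_inv] at hnil
  refine ⟨Group.nilpotencyClass (Subgroup.closure {x, y * x * y⁻¹}) + 1, Nat.le_add_left 1 _, ?_⟩
  rw [engel_succ]
  exact engel_eq_one_of_mem_of_isNilpotent _ (commutatorElement_mem_closure_conj y x)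
    (Subgroup.subset_closure (Set.mem_insert _ _))
end

section
/- Let G be a group such that for all a, b in G, the subgroup ⟨a², b⟩ is nilpotent, and let p be an odd prime. Then the set of p-elements of G is a subgroup of G. -/
/-!
Two `p`-elements `a`, `b` lie in `⟨a², b⟩`, since `a` has odd order; this subgroup is nilpotent
and generated by `p`-elements, so it suffices that a nilpotent group generated by `p`-elements is
a `p`-group. That follows by induction on the nilpotency class: if `γ` is the last nontrivial
term of the lower central series, then `G ⧸ γ` is a `p`-group by induction, `γ` is central, and
`γ` is generated by commutators `⁅u, v⁆` with `⁅u, -⁆` central-valued, hence multiplicative in `v`,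
so that `⁅u, v⁆ ^ p ^ k = ⁅u, v ^ p ^ k⁆ = 1` once `v ^ p ^ k ∈ γ`.
-/

open Subgroup
open scoped commutatorElement

section PElements

variable {G : Type*} [Group G] {p : ℕ}

def IsPElement (p : ℕ) (g : G) : Prop := ∃ k : ℕ, g ^ p ^ k = 1

lemma Subgroup.isPElement_coe_iff {H : Subgroup G} {x : H} :
    IsPElement p (x : G) ↔ IsPElement p x := by
  simp only [IsPElement, ← coe_pow, OneMemClass.coe_eq_one]

lemma Commute.isPElement_mul {a b : G} (hab : Commute a b) (ha : IsPElement p a)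
    (hb : IsPElement p b) : IsPElement p (a * b) := by
  obtain ⟨k, hk⟩ := ha
  obtain ⟨l, hl⟩ := hb
  refine ⟨k + l, ?_⟩
  rw [hab.mul_pow, pow_add, pow_mul, hk, one_pow, mul_comm, pow_mul, hl, one_pow, one_mul]

lemma isPElement_iff_orderOf (hp : p.Prime) {g : G} :
    IsPElement p g ↔ ∃ k, orderOf g = p ^ k := by
  simp only [IsPElement, ← orderOf_dvd_iff_pow_eq_one, Nat.dvd_prime_pow hp]
  constructor
  · rintro ⟨-, k, -, hk⟩
    exact ⟨k, hk⟩
  · rintro ⟨k, hk⟩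
    exact ⟨k, k, le_rfl, hk⟩

namespace IsPElement

lemma one : IsPElement p (1 : G) := ⟨0, one_pow _⟩

lemma inv {g : G} (hg : IsPElement p g) : IsPElement p g⁻¹ :=
  let ⟨k, hk⟩ := hg
  ⟨k, by rw [inv_pow, hk, inv_one]⟩

lemma pow {g : G} (hg : IsPElement p g) (n : ℕ) : IsPElement p (g ^ n) :=
  let ⟨k, hk⟩ := hg
  ⟨k, by rw [← pow_mul, mul_comm, pow_mul, hk, one_pow]⟩

lemma of_pow_pow {g : G} {k : ℕ} (hg : IsPElement p (g ^ p ^ k)) : IsPElement p g :=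
  let ⟨l, hl⟩ := hg
  ⟨k + l, by rw [pow_add, pow_mul, hl]⟩

lemma map {H : Type*} [Group H] (f : G →* H) {g : G} (hg : IsPElement p g) :
    IsPElement p (f g) :=
  let ⟨k, hk⟩ := hg
  ⟨k, by rw [← map_pow, hk, map_one]⟩

lemma mem_zpowers_sq (hodd : Odd p) {a : G} (ha : IsPElement p a) : a ∈ zpowers (a ^ 2) := by
  obtain ⟨k, hk⟩ := ha
  rw [mem_zpowers_pow_iff]
  exact Nat.coprime_two_left.mpr ((hodd.pow (n := k)).of_dvd_nat (orderOf_dvd_of_pow_eq_one hk))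

lemma of_mem_closure_of_subset_center {S : Set G} (hS : S ⊆ center G)
    (hSp : ∀ s ∈ S, IsPElement p s) {g : G} (hg : g ∈ closure S) : IsPElement p g := by
  have hcomm (x : G) (hx : x ∈ closure S) (y : G) : Commute x y :=
    (mem_center_iff.mp ((closure_le _).mpr hS hx) y).symm
  induction hg using closure_induction with
  | mem s hs => exact hSp s hs
  | one => exact one
  | mul x y hx _ ihx ihy => exact (hcomm x hx y).isPElement_mul ihx ihy
  | inv x _ ih => exact ih.inv

end IsPElement

lemma commutatorElement_pow_right {u : G} (hu : ∀ w, ⁅u, w⁆ ∈ center G) (v : G) (n : ℕ) :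
    ⁅u, v ^ n⁆ = ⁅u, v⁆ ^ n := by
  induction n with
  | zero => simp
  | succ n ih =>
    rw [pow_succ, commutatorElement_mul_right_eq_mul_conj, ih, mul_assoc _ (v ^ n),
      mem_center_iff.mp (hu v) (v ^ n), pow_succ]
    group

lemma isPElement_commutatorElement {u v : G} (hu : ∀ w, ⁅u, w⁆ ∈ center G)
    (hv : ∃ k, Commute u (v ^ p ^ k)) : IsPElement p ⁅u, v⁆ := by
  obtain ⟨k, hk⟩ := hv
  exact ⟨k, by rw [← commutatorElement_pow_right hu, commutatorElement_eq_one_iff_commute.mpr hk]⟩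

lemma lowerCentralSeries_quotient_lowerCentralSeries (n : ℕ) :
    (⊤ : Subgroup (G ⧸ (⊤ : Subgroup G).lowerCentralSeries n)).lowerCentralSeries n = ⊥ := by
  rw [← map_top_of_surjective _ (QuotientGroup.mk'_surjective _), ← map_lowerCentralSeries,
    QuotientGroup.map_mk'_self]

lemma IsPGroup.exists_pow_pow_mem_of_quotient {N : Subgroup G} [N.Normal]
    (hQ : IsPGroup p (G ⧸ N)) (g : G) : ∃ k, g ^ p ^ k ∈ N := by
  obtain ⟨k, hk⟩ := hQ g
  exact ⟨k, by rwa [← QuotientGroup.mk_pow, QuotientGroup.eq_one_iff] at hk⟩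

theorem IsPGroup.of_closure_eq_top_of_lowerCentralSeries_le_center {S : Set G}
    (hS : closure S = ⊤) (hSp : ∀ s ∈ S, IsPElement p s) {n : ℕ}
    (hn : (⊤ : Subgroup G).lowerCentralSeries n ≤ center G) : IsPGroup p G := by
  induction n generalizing G S with
  | zero =>
    exact fun g ↦ IsPElement.of_mem_closure_of_subset_center
      (subset_closure.trans (hS.le.trans hn)) hSp (hS ▸ mem_top g)
  | succ n ih =>
    set N := (⊤ : Subgroup G).lowerCentralSeries (n + 1)
    have hquot : ∀ g : G, ∃ k, g ^ p ^ k ∈ N := by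
      refine IsPGroup.exists_pow_pow_mem_of_quotient (ih (S := QuotientGroup.mk' N '' S) ?_
        ?_ (commutator_top_right_eq_bot_iff_le_center.mp
          (lowerCentralSeries_quotient_lowerCentralSeries (n + 1))))
      · rw [← MonoidHom.map_closure, hS, map_top_of_surjective _ (QuotientGroup.mk'_surjective N)]
      · rintro _ ⟨s, hs, rfl⟩
        exact (hSp s hs).map _
    have hNp (z : G) (hz : z ∈ N) : IsPElement p z := by
      refine IsPElement.of_mem_closure_of_subset_center ?_ ?_ hz
      · rintro _ ⟨u, hu, v, -, rfl⟩
        exact hn (commutator_mem_commutator hu (mem_top v))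
      · rintro _ ⟨u, hu, v, -, rfl⟩
        obtain ⟨k, hk⟩ := hquot v
        exact isPElement_commutatorElement
          (fun w ↦ hn (commutator_mem_commutator hu (mem_top w)))
          ⟨k, mem_center_iff.mp (hn hk) u⟩
    intro g
    obtain ⟨k, hk⟩ := hquot g
    exact (hNp _ hk).of_pow_pow

theorem IsPElement.of_mem_closure_of_isNilpotent {S : Set G}
    (hnil : Group.IsNilpotent (closure S)) (hSp : ∀ s ∈ S, IsPElement p s) {g : G}
    (hg : g ∈ closure S) : IsPElement p g := by
  obtain ⟨n, hn⟩ := Subgroup.nilpotent_iff_lowerCentralSeries.mp hnil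
  have hK : IsPGroup p (closure S) :=
    IsPGroup.of_closure_eq_top_of_lowerCentralSeries_le_center closure_closure_coe_preimage
      (fun s hs ↦ isPElement_coe_iff.mp (hSp s hs)) (hn.le.trans bot_le)
  exact isPElement_coe_iff.mpr (hK ⟨g, hg⟩)

theorem IsPElement.mul_of_isNilpotent_closure_sq (hodd : Odd p) {a b : G}
    (hnil : Group.IsNilpotent (closure {a ^ 2, b})) (ha : IsPElement p a) (hb : IsPElement p b) :
    IsPElement p (a * b) := by
  have hgen : ∀ s ∈ ({a ^ 2, b} : Set G), IsPElement p s := by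
    rintro s (rfl | rfl)
    exacts [ha.pow 2, hb]
  refine IsPElement.of_mem_closure_of_isNilpotent hnil hgen (mul_mem ?_ (subset_closure ?_))
  · exact zpowers_le.mpr (subset_closure (by simp)) (ha.mem_zpowers_sq hodd)
  · simp

end PElements

theorem stmt_5 {G : Type*} [Group G]
    (h : ∀ a b : G, Group.IsNilpotent ↥(Subgroup.closure {a ^ 2, b}))
    (p : ℕ) (hp : p.Prime) (hodd : Odd p) :
    ∃ H : Subgroup G, ∀ g : G, g ∈ H ↔ ∃ k : ℕ, orderOf g = p ^ k := by
  refine ⟨{ carrier := {g | IsPElement p g}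
            one_mem' := IsPElement.one
            mul_mem' := fun ha hb ↦ ha.mul_of_isNilpotent_closure_sq hodd (h _ _) hb
            inv_mem' := IsPElement.inv }, fun g ↦ isPElement_iff_orderOf hp⟩
end

section
/- Let G be a finite group satisfying condition (𝒩, 3): every subset of G with 4 elements contains a pair {x, y} such that ⟨x, y⟩ is nilpotent. Then G is nilpotent. -/
/-!
If `x` has odd order and does not commute with `y`, the elements `x, y, xy, x⁻¹y` are distinct and
any two of them generate a subgroup containing `x` and `y`: for the pair `xy, x⁻¹y` because their
quotient is `x²` and `x ∈ ⟨x²⟩`. So `⟨x, y⟩` is nilpotent. Of two elements of prime power orders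
for distinct primes one has odd order, so they lie in a common nilpotent subgroup and commute.
Hence a Sylow `p`-subgroup is normalized by a Sylow `q`-subgroup for every prime `q`; its
normalizer then has index prime to every prime, so every Sylow subgroup is normal.
-/

open Subgroup

/-- The condition `(𝒩, n)`. -/
def NilpotentPairCondition (n : ℕ) (G : Type*) [Group G] : Prop :=
  ∀ S : Finset G, S.card = n + 1 → ∃ x ∈ S, ∃ y ∈ S, x ≠ y ∧
    Group.IsNilpotent (closure {x, y})

section

variable {G : Type*} [Group G]

theorem Subgroup.isNilpotent_of_le {H K : Subgroup G} (hHK : H ≤ K) [Group.IsNilpotent K] :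
    Group.IsNilpotent H :=
  Group.nilpotent_of_mulEquiv (subgroupOfEquivOfLe hHK)

theorem Subgroup.eq_top_of_forall_exists_sylow_le [Finite G] (H : Subgroup G)
    (h : ∀ (p : ℕ) [Fact p.Prime], ∃ P : Sylow p G, (P : Subgroup G) ≤ H) : H = ⊤ := by
  refine index_eq_one.mp (Nat.eq_one_iff_not_exists_prime_dvd.mpr fun p hp hdvd => ?_)
  have : Fact p.Prime := ⟨hp⟩
  obtain ⟨P, hPH⟩ := h p
  exact P.not_dvd_index (hdvd.trans (index_dvd_of_le hPH))

theorem Commute.of_orderOf_eq_prime_pow [Finite G] [Group.IsNilpotent G] {p q : ℕ}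
    [Fact p.Prime] [Fact q.Prime] (hpq : p ≠ q) {x y : G} {m n : ℕ} (hx : orderOf x = p ^ m)
    (hy : orderOf y = q ^ n) : Commute x y := by
  obtain ⟨P, hP⟩ := (IsPGroup.of_card (by rw [Nat.card_zpowers, hx]) :
    IsPGroup p (zpowers x)).exists_le_sylow
  obtain ⟨Q, hQ⟩ := (IsPGroup.of_card (by rw [Nat.card_zpowers, hy]) :
    IsPGroup q (zpowers y)).exists_le_sylow
  exact commute_of_normal_of_disjoint _ _ inferInstance inferInstance
    (IsPGroup.disjoint_of_ne p q hpq _ _ P.isPGroup' Q.isPGroup') x y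
    (hP (mem_zpowers x)) (hQ (mem_zpowers y))

theorem mem_zpowers_sq_of_odd_orderOf {x : G} (hx : Odd (orderOf x)) : x ∈ zpowers (x ^ 2) := by
  obtain ⟨m, hm⟩ := hx
  refine ⟨m + 1, ?_⟩
  calc (x ^ 2) ^ ((m + 1 : ℕ) : ℤ) = x ^ (2 * m + 1) * x := by
        rw [zpow_natCast, ← pow_mul, ← pow_succ]; congr 1
    _ = x := by rw [← hm, pow_orderOf_eq_one, one_mul]

theorem mem_and_mem_of_mul_mem_of_inv_mul_mem {K : Subgroup G} {x y : G}
    (hx : Odd (orderOf x)) (h₁ : x * y ∈ K) (h₂ : x⁻¹ * y ∈ K) : x ∈ K ∧ y ∈ K := by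
  have hsq : x ^ 2 ∈ K := by
    simpa [sq, mul_assoc] using mul_mem h₁ (inv_mem h₂)
  have hxK : x ∈ K := zpowers_le.mpr hsq (mem_zpowers_sq_of_odd_orderOf hx)
  exact ⟨hxK, (mul_mem_cancel_left hxK).mp h₁⟩

theorem mem_and_mem_of_mem_quadruple [DecidableEq G] {K : Subgroup G} {x y a b : G}
    (hx : Odd (orderOf x)) (ha : a ∈ ({x, y, x * y, x⁻¹ * y} : Finset G))
    (hb : b ∈ ({x, y, x * y, x⁻¹ * y} : Finset G)) (hab : a ≠ b) (haK : a ∈ K) (hbK : b ∈ K) :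
    x ∈ K ∧ y ∈ K := by
  simp only [Finset.mem_insert, Finset.mem_singleton] at ha hb
  rcases ha with rfl | rfl | rfl | rfl <;> rcases hb with rfl | rfl | rfl | rfl <;>
    first
    | exact absurd rfl hab
    | exact mem_and_mem_of_mul_mem_of_inv_mul_mem hx haK hbK
    | exact mem_and_mem_of_mul_mem_of_inv_mul_mem hx hbK haK
    | simp_all [mul_mem_cancel_left, mul_mem_cancel_right]

theorem card_quadruple_eq_four [DecidableEq G] {x y : G} (hx : Odd (orderOf x))
    (hxy : ¬Commute x y) : ({x, y, x * y, x⁻¹ * y} : Finset G).card = 4 := by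
  have hx1 : x ≠ 1 := by rintro rfl; exact hxy (Commute.one_left y)
  have hinv : x ≠ x⁻¹ := fun e => hx1 <| by
    have hsq : x ^ 2 = 1 := by rw [sq]; nth_rw 2 [e]; exact mul_inv_cancel x
    simpa [hsq] using mem_zpowers_sq_of_odd_orderOf hx
  refine Finset.card_eq_four.mpr ⟨x, y, x * y, x⁻¹ * y, ?_, ?_, ?_, ?_, ?_, ?_, rfl⟩
  · rintro rfl; exact hxy (Commute.refl x)
  · intro e; exact hxy (by rw [left_eq_mul.mp e]; exact Commute.one_right x)
  · intro e
    exact hxy (by rw [← eq_inv_mul_iff_mul_eq.mp e]; exact (Commute.refl x).mul_right (.refl x))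
  · intro e; exact hx1 (right_eq_mul.mp e)
  · intro e; exact hx1 (inv_eq_one.mp (right_eq_mul.mp e))
  · intro e; exact hinv (mul_right_cancel e)

namespace NilpotentPairCondition

theorem isNilpotent_closure_pair_of_odd_orderOf (h : NilpotentPairCondition 3 G) {x : G}
    (hx : Odd (orderOf x)) (y : G) : Group.IsNilpotent (closure {x, y}) := by
  classical
  by_cases hxy : Commute x y
  · have := isMulCommutative_closure (k := {x, y}) (by
      rintro a (rfl | rfl) b (rfl | rfl) <;> first | rfl | exact hxy.eq | exact hxy.eq.symm)
    open IsMulCommutative in infer_instance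
  obtain ⟨a, ha, b, hb, hab, hnil⟩ := h _ (card_quadruple_eq_four hx hxy)
  have hle : closure {x, y} ≤ closure {a, b} := by
    rw [closure_le, Set.insert_subset_iff, Set.singleton_subset_iff]
    exact mem_and_mem_of_mem_quadruple hx ha hb hab (subset_closure (by simp))
      (subset_closure (by simp))
  exact isNilpotent_of_le hle

theorem commute_of_orderOf_eq_prime_pow [Finite G] (h : NilpotentPairCondition 3 G)
    {p q : ℕ} [Fact p.Prime] [Fact q.Prime] (hpq : p ≠ q) {x y : G} {m n : ℕ}
    (hx : orderOf x = p ^ m) (hy : orderOf y = q ^ n) : Commute x y := by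
  wlog hp : Odd p generalizing p q x y m n
  · have hp2 : p = 2 := (Fact.out : p.Prime).eq_two_or_odd'.resolve_right hp
    exact (this hpq.symm hy hx ((Fact.out : q.Prime).odd_of_ne_two (hp2 ▸ hpq.symm))).symm
  have := h.isNilpotent_closure_pair_of_odd_orderOf (hx ▸ hp.pow) y
  have hcomm : Commute (⟨x, subset_closure (by simp)⟩ : closure {x, y})
      ⟨y, subset_closure (by simp)⟩ :=
    .of_orderOf_eq_prime_pow hpq (by rw [orderOf_mk, hx]) (by rw [orderOf_mk, hy])
  exact congrArg Subtype.val hcomm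

theorem sylow_le_centralizer [Finite G] (h : NilpotentPairCondition 3 G) {p q : ℕ}
    [Fact p.Prime] [Fact q.Prime] (hpq : p ≠ q) (P : Sylow p G) (Q : Sylow q G) :
    (P : Subgroup G) ≤ centralizer Q := by
  intro g hg t ht
  obtain ⟨m, hm⟩ := IsPGroup.iff_orderOf.mp P.isPGroup' ⟨g, hg⟩
  obtain ⟨n, hn⟩ := IsPGroup.iff_orderOf.mp Q.isPGroup' ⟨t, ht⟩
  rw [orderOf_mk] at hm hn
  exact (h.commute_of_orderOf_eq_prime_pow hpq hm hn).eq.symm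

end NilpotentPairCondition

end

theorem stmt_18 {G : Type*} [Group G] [Finite G]
    (h : ∀ S : Finset G, S.card = 4 → ∃ x ∈ S, ∃ y ∈ S, x ≠ y ∧
      Group.IsNilpotent ↥(Subgroup.closure {x, y})) :
    Group.IsNilpotent G := by
  refine (Group.isNilpotent_of_finite_tfae.out 3 0).mp ?_
  intro p _ P
  rw [← normalizer_eq_top_iff]
  refine eq_top_of_forall_exists_sylow_le _ fun q _ => ?_
  by_cases hqp : q = p
  · subst hqp
    exact ⟨P, le_normalizer⟩
  obtain ⟨Q⟩ := (inferInstance : Nonempty (Sylow q G))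
  exact ⟨Q, (NilpotentPairCondition.sylow_le_centralizer h hqp Q P).trans
    (centralizer_le_normalizer _)⟩
end
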